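/- arXiv:2410.04615 — 3 statements merged into one kernel-verified Lean document; each statement's English description precedes it below -/
import Mathlib

section
/- Assume the dynamics are control affine, a(x,u) = ã(x) + σ(x)B̃(x)u, and the running cost is separable and quadratic in the control, ℓ(x,u) = ℓ̃(x) + (1/2)uᵀRu, with R an m×m symmetric positive definite matrix, and define h(x,u,y,z) := ℓ̃(x) − (1/2) zᵀB̃(x)R⁻¹B̃(x)ᵀz − zᵀB̃(x)u. Let V : [0,T] × ℝⁿ → ℝ be continuously differentiable in t and twice continuously differentiable in x, and suppose V solves the HJB equation ∂ₜV(t,x) + inf_{u∈ℝᵐ}{ ∂ₓV(t,x)ᵀa(x,u) + ℓ(x,u) } + (1/2)Tr(∂ₓₓV(t,x) σ(x)σ(x)ᵀ) = 0 with V(T,x) = ℓ_f(x). Then for every feedback law k : [0,T] × ℝⁿ → ℝᵐ, the function φ = V satisfies ∂ₜφ(t,x) + ∂ₓφ(t,x)ᵀ a(x,k(t,x)) + (1/2)Tr(∂ₓₓφ(t,x) σ(x)σ(x)ᵀ) + h(x, k(t,x), φ(t,x), σ(x)ᵀ∂ₓφ(t,x)) = 0 for all (t,x) ∈ [0,T]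 × ℝⁿ, with φ(T,x) = ℓ_f(x). -/
/-! Completing the square, `c ⬝ᵥ u + ½ uᵀRu = ½ (u + R⁻¹c)ᵀR(u + R⁻¹c) - ½ cᵀR⁻¹c`, computes the
infimum in the HJB equation: with `c = B̃ᵀσᵀ∂ₓV` it equals `∂ₓVᵀã + ℓ̃ - ½ zᵀB̃R⁻¹B̃ᵀz`,
`z = σᵀ∂ₓV`. For any control `u` the same quantity is `∂ₓVᵀa(x,u) + h(x,u,V,z)`, because the
term `zᵀB̃u` in the driver cancels the control part of the drift. -/

open Matrix

/-- Partial derivative of `f : ℝⁿ → ℝ` in the `i`-th coordinate at `x`. -/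
noncomputable def pdv {n : ℕ} (i : Fin n) (f : (Fin n → ℝ) → ℝ) (x : Fin n → ℝ) : ℝ :=
  deriv (fun s => f (Function.update x i s)) (x i)

/-- Spatial gradient of `f : ℝⁿ → ℝ` at `x`. -/
noncomputable def grad {n : ℕ} (f : (Fin n → ℝ) → ℝ) (x : Fin n → ℝ) : Fin n → ℝ :=
  fun i => pdv i f x

/-- Spatial Hessian of `f : ℝⁿ → ℝ` at `x`. -/
noncomputable def hess {n : ℕ} (f : (Fin n → ℝ) → ℝ) (x : Fin n → ℝ) :
    Matrix (Fin n) (Fin n) ℝ :=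
  Matrix.of fun i j => pdv i (fun y => pdv j f y) x

section CompletingTheSquare

variable {ι : Type*} [Fintype ι] {R : Matrix ι ι ℝ}

theorem Matrix.IsSymm.dotProduct_mulVec_comm {α : Type*} [CommSemiring α] {A : Matrix ι ι α}
    (hA : A.IsSymm) (u v : ι → α) : u ⬝ᵥ A *ᵥ v = v ⬝ᵥ A *ᵥ u := by
  rw [dotProduct_mulVec, ← mulVec_transpose, hA.eq, dotProduct_comm]


theorem Matrix.IsSymm.dotProduct_add_half_quadForm [DecidableEq ι] (hRs : R.IsSymm)
    (hR : IsUnit R) (c u : ι → ℝ) :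
    c ⬝ᵥ u + 1 / 2 * (u ⬝ᵥ R *ᵥ u)
      = 1 / 2 * ((u + R⁻¹ *ᵥ c) ⬝ᵥ R *ᵥ (u + R⁻¹ *ᵥ c)) - 1 / 2 * (c ⬝ᵥ R⁻¹ *ᵥ c) := by
  have hRw : ∀ v, v ⬝ᵥ R *ᵥ R⁻¹ *ᵥ c = v ⬝ᵥ c := fun v => by
    rw [mulVec_mulVec, mul_nonsing_inv R ((isUnit_iff_isUnit_det R).1 hR), one_mulVec]
  simp only [mulVec_add, add_dotProduct, dotProduct_add, hRw,
    hRs.dotProduct_mulVec_comm (R⁻¹ *ᵥ c) u, dotProduct_comm _ c]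
  ring

theorem Matrix.PosDef.iInf_add_dotProduct_add_half_quadForm [DecidableEq ι] (hR : R.PosDef)
    (K : ℝ) (c : ι → ℝ) :
    ⨅ u : ι → ℝ, (K + (c ⬝ᵥ u + 1 / 2 * (u ⬝ᵥ R *ᵥ u)))
      = K - 1 / 2 * (c ⬝ᵥ R⁻¹ *ᵥ c) := by
  have hRs : R.IsSymm := by
    simpa [IsSymm, conjTranspose_eq_transpose_of_trivial] using hR.isHermitian.eq
  refine IsGLB.ciInf_eq (IsLeast.isGLB ⟨⟨-(R⁻¹ *ᵥ c), ?_⟩, ?_⟩)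
  · simp only [hRs.dotProduct_add_half_quadForm hR.isUnit, neg_add_cancel, mulVec_zero,
      zero_dotProduct]
    ring
  · rintro _ ⟨u, rfl⟩
    have hnonneg := hR.posSemidef.dotProduct_mulVec_nonneg (u + R⁻¹ *ᵥ c)
    simp only [star_trivial] at hnonneg
    simp only [hRs.dotProduct_add_half_quadForm hR.isUnit]
    linarith

end CompletingTheSquare

section

variable {ι κ μ α : Type*} [Fintype ι] [Fintype κ] [Fintype μ] [CommSemiring α]

theorem Matrix.dotProduct_mul_mulVec (g : ι → α) (S : Matrix ι κ α) (B : Matrix κ μ α)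
    (u : μ → α) : g ⬝ᵥ (S * B) *ᵥ u = (Bᵀ *ᵥ Sᵀ *ᵥ g) ⬝ᵥ u := by
  rw [dotProduct_mulVec, mulVec_transpose, mulVec_transpose, vecMul_vecMul]

theorem Matrix.dotProduct_mul_mul_transpose_mulVec (z : κ → α) (B : Matrix κ μ α)
    (M : Matrix μ μ α) : z ⬝ᵥ (B * M * Bᵀ) *ᵥ z = (Bᵀ *ᵥ z) ⬝ᵥ M *ᵥ Bᵀ *ᵥ z := by
  rw [← mulVec_mulVec, ← mulVec_mulVec, dotProduct_mulVec, mulVec_transpose]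

end

theorem stmt_3_general {n m : ℕ} {T : ℝ}
    (atil : (Fin n → ℝ) → (Fin n → ℝ))
    (σ : (Fin n → ℝ) → Matrix (Fin n) (Fin n) ℝ)
    (Btil : (Fin n → ℝ) → Matrix (Fin n) (Fin m) ℝ)
    (ltil : (Fin n → ℝ) → ℝ) (ℓf : (Fin n → ℝ) → ℝ)
    (R : Matrix (Fin m) (Fin m) ℝ) (hR : R.PosDef)
    (a : (Fin n → ℝ) → (Fin m → ℝ) → (Fin n → ℝ))
    (ha : ∀ x u, a x u = atil x + (σ x * Btil x).mulVec u)
    (ℓ : (Fin n → ℝ) → (Fin m → ℝ) → ℝ)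
    (hℓ : ∀ x u, ℓ x u = ltil x + (1 / 2) * (u ⬝ᵥ R.mulVec u))
    (h : (Fin n → ℝ) → (Fin m → ℝ) → ℝ → (Fin n → ℝ) → ℝ)
    (hh : ∀ x u y z, h x u y z =
      ltil x - (1 / 2) * (z ⬝ᵥ (Btil x * R⁻¹ * (Btil x)ᵀ).mulVec z) - z ⬝ᵥ (Btil x).mulVec u)
    (V : ℝ → (Fin n → ℝ) → ℝ)
    (hHJB : ∀ t ∈ Set.Icc (0 : ℝ) T, ∀ x : Fin n → ℝ,
      deriv (fun s => V s x) t
        + (⨅ u : Fin m → ℝ, (grad (V t) x ⬝ᵥ a x u + ℓ x u))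
        + (1 / 2) * Matrix.trace (hess (V t) x * (σ x * (σ x)ᵀ)) = 0)
    (hVT : ∀ x, V T x = ℓf x) :
    ∀ k : ℝ → (Fin n → ℝ) → (Fin m → ℝ),
      (∀ t ∈ Set.Icc (0 : ℝ) T, ∀ x : Fin n → ℝ,
        deriv (fun s => V s x) t
          + grad (V t) x ⬝ᵥ a x (k t x)
          + (1 / 2) * Matrix.trace (hess (V t) x * (σ x * (σ x)ᵀ))
          + h x (k t x) (V t x) ((σ x)ᵀ.mulVec (grad (V t) x)) = 0) ∧
      ∀ x, V T x = ℓf x := by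
  intro k
  refine ⟨fun t ht x => ?_, hVT⟩
  set g := grad (V t) x
  set z := (σ x)ᵀ *ᵥ g
  have hHamiltonian : ⨅ u, (g ⬝ᵥ a x u + ℓ x u)
      = g ⬝ᵥ atil x + ltil x - 1 / 2 * (z ⬝ᵥ (Btil x * R⁻¹ * (Btil x)ᵀ) *ᵥ z) := by
    have hexpand : ∀ u, g ⬝ᵥ a x u + ℓ x u
        = g ⬝ᵥ atil x + ltil x + ((Btil x)ᵀ *ᵥ z ⬝ᵥ u + 1 / 2 * (u ⬝ᵥ R *ᵥ u)) := fun u => by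
      rw [ha, hℓ, dotProduct_add, dotProduct_mul_mulVec]
      ring
    rw [iInf_congr hexpand, hR.iInf_add_dotProduct_add_half_quadForm,
      dotProduct_mul_mul_transpose_mulVec]
  have hHJBx := hHJB t ht x
  rw [hHamiltonian] at hHJBx
  rw [ha, hh, dotProduct_add, dotProduct_mul_mulVec, dotProduct_mulVec z (Btil x),
    ← mulVec_transpose]
  linarith

/-- If `V`, C¹ in `t` and C² in `x`, solves the HJB equation
`∂ₜV + inf_u { ∂ₓVᵀa(x,u) + ℓ(x,u) } + (1/2)Tr(∂ₓₓV σσᵀ) = 0`, `V(T,·) = ℓ_f`, in the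
control-affine, separable-quadratic-cost setting with driver
`h(x,u,y,z) = ℓ̃(x) - (1/2) zᵀB̃(x)R⁻¹B̃(x)ᵀz - zᵀB̃(x)u`, then for every feedback law `k`,
`φ = V` satisfies `∂ₜφ + ∂ₓφᵀ a(x,k(t,x)) + (1/2)Tr(∂ₓₓφ σσᵀ) + h(x,k(t,x),φ,σᵀ∂ₓφ) = 0`
with `φ(T,·) = ℓ_f`. -/
theorem stmt_3 {n m : ℕ} {T : ℝ} (hT : 0 < T)
    (atil : (Fin n → ℝ) → (Fin n → ℝ))
    (σ : (Fin n → ℝ) → Matrix (Fin n) (Fin n) ℝ)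
    (Btil : (Fin n → ℝ) → Matrix (Fin n) (Fin m) ℝ)
    (ltil : (Fin n → ℝ) → ℝ) (ℓf : (Fin n → ℝ) → ℝ)
    (R : Matrix (Fin m) (Fin m) ℝ) (hR : R.PosDef)
    (a : (Fin n → ℝ) → (Fin m → ℝ) → (Fin n → ℝ))
    (ha : ∀ x u, a x u = atil x + (σ x * Btil x).mulVec u)
    (ℓ : (Fin n → ℝ) → (Fin m → ℝ) → ℝ)
    (hℓ : ∀ x u, ℓ x u = ltil x + (1 / 2) * (u ⬝ᵥ R.mulVec u))
    (h : (Fin n → ℝ) → (Fin m → ℝ) → ℝ → (Fin n → ℝ) → ℝ)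
    (hh : ∀ x u y z, h x u y z =
      ltil x - (1 / 2) * (z ⬝ᵥ (Btil x * R⁻¹ * (Btil x)ᵀ).mulVec z) - z ⬝ᵥ (Btil x).mulVec u)
    (V : ℝ → (Fin n → ℝ) → ℝ)
    (hV1 : ∀ x, ContDiff ℝ 1 fun t => V t x)
    (hV2 : ∀ t, ContDiff ℝ 2 (V t))
    (hHJB : ∀ t ∈ Set.Icc (0 : ℝ) T, ∀ x : Fin n → ℝ,
      deriv (fun s => V s x) t
        + (⨅ u : Fin m → ℝ, (grad (V t) x ⬝ᵥ a x u + ℓ x u))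
        + (1 / 2) * Matrix.trace (hess (V t) x * (σ x * (σ x)ᵀ)) = 0)
    (hVT : ∀ x, V T x = ℓf x) :
    ∀ k : ℝ → (Fin n → ℝ) → (Fin m → ℝ),
      (∀ t ∈ Set.Icc (0 : ℝ) T, ∀ x : Fin n → ℝ,
        deriv (fun s => V s x) t
          + grad (V t) x ⬝ᵥ a x (k t x)
          + (1 / 2) * Matrix.trace (hess (V t) x * (σ x * (σ x)ᵀ))
          + h x (k t x) (V t x) ((σ x)ᵀ.mulVec (grad (V t) x)) = 0) ∧
      ∀ x, V T x = ℓf x :=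
  stmt_3_general atil σ Btil ltil ℓf R hR a ha ℓ hℓ h hh V hHJB hVT
end

section
/- Let T > 0, let α : [0,T] × ℝⁿ → ℝⁿ be continuously differentiable in x, let D : ℝⁿ → ℝ^{n×n} be twice continuously differentiable, and let p : [0,T] × ℝⁿ → (0,∞) be continuously differentiable in t and twice continuously differentiable in x, solving the Fokker–Planck equation ∂ₜp(t,x) = − Σᵢ ∂ᵢ( αᵢ(t,x) p(t,x) ) + (1/2) Σᵢⱼ ∂ᵢ∂ⱼ( Dᵢⱼ(x) p(t,x) ) for all (t,x). Define the score drift b : [0,T] × ℝⁿ → ℝⁿ by bᵢ(t,x) := − (1/p(t,x)) Σⱼ ∂ⱼ( Dⱼᵢ(x) p(t,x) ). Then p also solves the time-reversed Fokker–Planck equation ∂ₜp(t,x) = − Σᵢ ∂ᵢ( (αᵢ(t,x) + bᵢ(t,x)) p(t,x) ) − (1/2) Σᵢⱼ ∂ᵢ∂ⱼ( Dᵢⱼ(x) p(t,x) ) for all (t,x) ∈ [0,T] × ℝⁿ. -/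
open Matrix

/-! The reversed equation differs from the forward one by
`-Σᵢ ∂ᵢ(bᵢ p) - Σᵢⱼ ∂ᵢ∂ⱼ(Dᵢⱼ p)`. Since `bᵢ p = -Σⱼ ∂ⱼ(Dⱼᵢ p)`, the first sum equals
`Σᵢⱼ ∂ᵢ∂ⱼ(Dⱼᵢ p)`, which by symmetry of second derivatives (Schwarz) is `Σᵢⱼ ∂ᵢ∂ⱼ(Dᵢⱼ p)`,
so the two sums cancel. -/

open Finset

section PartialDerivatives

variable {n : ℕ} {f g : (Fin n → ℝ) → ℝ} {x : Fin n → ℝ}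

lemma pdv_eq_fderiv (i : Fin n) (hf : DifferentiableAt ℝ f x) :
    pdv i f x = fderiv ℝ f x (Pi.single i 1) := by
  rw [← Function.update_eq_self i x] at hf
  have := (hf.hasFDerivAt.comp_hasDerivAt (x i) (hasDerivAt_update x i (x i))).deriv
  rwa [Function.update_eq_self] at this

lemma pdv_sub (i : Fin n) (hf : DifferentiableAt ℝ f x) (hg : DifferentiableAt ℝ g x) :
    pdv i (fun y => f y - g y) x = pdv i f x - pdv i g x := by
  rw [pdv_eq_fderiv i (hf.fun_sub hg), fderiv_fun_sub hf hg, pdv_eq_fderiv i hf,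
    pdv_eq_fderiv i hg, _root_.sub_apply]

lemma pdv_sum {ι : Type*} (i : Fin n) (s : Finset ι) {g : ι → (Fin n → ℝ) → ℝ}
    (hg : ∀ j ∈ s, DifferentiableAt ℝ (g j) x) :
    pdv i (fun y => ∑ j ∈ s, g j y) x = ∑ j ∈ s, pdv i (g j) x := by
  rw [pdv_eq_fderiv i (DifferentiableAt.fun_sum hg), fderiv_fun_sum hg,
    _root_.sum_apply]
  exact sum_congr rfl fun j hj => (pdv_eq_fderiv i (hg j hj)).symm

lemma pdv_eq_fderiv_fun (i : Fin n) (hf : Differentiable ℝ f) :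
    pdv i f = fun y => fderiv ℝ f y (Pi.single i 1) :=
  funext fun y => pdv_eq_fderiv i (hf y)

lemma ContDiff.pdv {k m : WithTop ℕ∞} (i : Fin n) (hf : ContDiff ℝ k f) (hmk : m + 1 ≤ k) :
    ContDiff ℝ m (pdv i f) := by
  rw [pdv_eq_fderiv_fun i ((hf.of_le (le_add_self.trans hmk)).differentiable one_ne_zero)]
  exact (hf.fderiv_right hmk).clm_apply contDiff_const

lemma pdv_pdv_comm (i j : Fin n) (hf : ContDiff ℝ 2 f) (x : Fin n → ℝ) :
    pdv i (pdv j f) x = pdv j (pdv i f) x := by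
  have hd : Differentiable ℝ (fderiv ℝ f) :=
    (hf.fderiv_right (m := 1) (by norm_num)).differentiable one_ne_zero
  have pdv_pdv_eq : ∀ i j : Fin n,
      pdv i (pdv j f) x = fderiv ℝ (fderiv ℝ f) x (Pi.single i 1) (Pi.single j 1) := by
    intro i j
    rw [pdv_eq_fderiv_fun j (hf.differentiable two_ne_zero),
      pdv_eq_fderiv i ((hd x).clm_apply (differentiableAt_const _)),
      fderiv_clm_apply (hd x) (differentiableAt_const _)]
    simp
  rw [pdv_pdv_eq, pdv_pdv_eq,
    hf.contDiffAt.isSymmSndFDerivAt minSmoothness_of_isRCLikeNormedField.le]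

lemma sum_pdv_pdv_transpose {F : Fin n → Fin n → (Fin n → ℝ) → ℝ}
    (hF : ∀ i j, ContDiff ℝ 2 (F i j)) (x : Fin n → ℝ) :
    ∑ i, ∑ j, pdv i (pdv j (F j i)) x = ∑ i, ∑ j, pdv i (pdv j (F i j)) x :=
  sum_comm.trans <| sum_congr rfl fun i _ => sum_congr rfl fun j _ =>
    pdv_pdv_comm j i (hF i j) x

end PartialDerivatives

theorem stmt_8_general {n : ℕ} {T : ℝ}
    (α : ℝ → (Fin n → ℝ) → (Fin n → ℝ))
    (hα : ∀ t, ∀ i : Fin n, ContDiff ℝ 1 fun x => α t x i)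
    (D : (Fin n → ℝ) → Matrix (Fin n) (Fin n) ℝ)
    (hD : ∀ i j : Fin n, ContDiff ℝ 2 fun x => D x i j)
    (p : ℝ → (Fin n → ℝ) → ℝ)
    (hppos : ∀ t x, 0 < p t x)
    (hp2 : ∀ t, ContDiff ℝ 2 (p t))
    (hFPE : ∀ t ∈ Set.Icc (0 : ℝ) T, ∀ x : Fin n → ℝ,
      deriv (fun s => p s x) t =
        -(∑ i, pdv i (fun y => α t y i * p t y) x)
          + (1 / 2) * ∑ i, ∑ j, pdv i (fun y => pdv j (fun y' => D y' i j * p t y') y) x)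
    (b : ℝ → (Fin n → ℝ) → (Fin n → ℝ))
    (hb : ∀ t x, ∀ i : Fin n,
      b t x i = -(1 / p t x) * ∑ j, pdv j (fun y => D y j i * p t y) x) :
    ∀ t ∈ Set.Icc (0 : ℝ) T, ∀ x : Fin n → ℝ,
      deriv (fun s => p s x) t =
        -(∑ i, pdv i (fun y => (α t y i + b t y i) * p t y) x)
          - (1 / 2) * ∑ i, ∑ j, pdv i (fun y => pdv j (fun y' => D y' i j * p t y') y) x := by
  intro t ht x
  have hDp : ∀ i j, ContDiff ℝ 2 fun y => D y i j * p t y := fun i j => (hD i j).mul (hp2 t)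
  have drift_mul : ∀ i, (fun y => (α t y i + b t y i) * p t y) =
      fun y => α t y i * p t y - ∑ j, pdv j (fun y' => D y' j i * p t y') y := by
    intro i
    funext y
    have hp : p t y ≠ 0 := (hppos t y).ne'
    rw [hb]
    field_simp
    ring
  have pdv_drift_mul : ∀ i, pdv i (fun y => (α t y i + b t y i) * p t y) x =
      pdv i (fun y => α t y i * p t y) x - ∑ j, pdv i (pdv j fun y => D y j i * p t y) x := by
    intro i
    have hαp : DifferentiableAt ℝ (fun y => α t y i * p t y) x :=
      ((hα t i).mul ((hp2 t).of_le one_le_two)).differentiable one_ne_zero x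
    have hflux : ∀ j ∈ univ, DifferentiableAt ℝ (pdv j fun y => D y j i * p t y) x :=
      fun j _ => ((hDp j i).pdv j le_rfl).differentiable one_ne_zero x
    rw [drift_mul, pdv_sub i hαp (DifferentiableAt.fun_sum hflux), pdv_sum i _ hflux]
  rw [hFPE t ht x, sum_congr rfl fun i _ => pdv_drift_mul i, sum_sub_distrib,
    sum_pdv_pdv_transpose hDp]
  ring

/-- If the strictly positive density `p`, C¹ in `t` and C² in `x`, solves the
Fokker–Planck equation `∂ₜp = -Σᵢ ∂ᵢ(αᵢ p) + (1/2)Σᵢⱼ ∂ᵢ∂ⱼ(Dᵢⱼ p)` (`α` C¹ in `x`, `D` C²),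
and `bᵢ(t,x) = -(1/p) Σⱼ ∂ⱼ(Dⱼᵢ p)` is the score drift, then `p` also solves the
time-reversed Fokker–Planck equation
`∂ₜp = -Σᵢ ∂ᵢ((αᵢ + bᵢ) p) - (1/2)Σᵢⱼ ∂ᵢ∂ⱼ(Dᵢⱼ p)`. -/
theorem stmt_8 {n : ℕ} {T : ℝ} (hT : 0 < T)
    (α : ℝ → (Fin n → ℝ) → (Fin n → ℝ))
    (hα : ∀ t, ∀ i : Fin n, ContDiff ℝ 1 fun x => α t x i)
    (D : (Fin n → ℝ) → Matrix (Fin n) (Fin n) ℝ)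
    (hD : ∀ i j : Fin n, ContDiff ℝ 2 fun x => D x i j)
    (p : ℝ → (Fin n → ℝ) → ℝ)
    (hppos : ∀ t x, 0 < p t x)
    (hp1 : ∀ x, ContDiff ℝ 1 fun t => p t x)
    (hp2 : ∀ t, ContDiff ℝ 2 (p t))
    (hFPE : ∀ t ∈ Set.Icc (0 : ℝ) T, ∀ x : Fin n → ℝ,
      deriv (fun s => p s x) t =
        -(∑ i, pdv i (fun y => α t y i * p t y) x)
          + (1 / 2) * ∑ i, ∑ j, pdv i (fun y => pdv j (fun y' => D y' i j * p t y') y) x)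
    (b : ℝ → (Fin n → ℝ) → (Fin n → ℝ))
    (hb : ∀ t x, ∀ i : Fin n,
      b t x i = -(1 / p t x) * ∑ j, pdv j (fun y => D y j i * p t y) x) :
    ∀ t ∈ Set.Icc (0 : ℝ) T, ∀ x : Fin n → ℝ,
      deriv (fun s => p s x) t =
        -(∑ i, pdv i (fun y => (α t y i + b t y i) * p t y) x)
          - (1 / 2) * ∑ i, ∑ j, pdv i (fun y => pdv j (fun y' => D y' i j * p t y') y) x :=
  stmt_8_general α hα D hD p hppos hp2 hFPE b hb
end

section
/- Let x¹, …, x^N ∈ ℝⁿ be given points with empirical mean m̂ := (1/N)Σᵢ xⁱ and empirical covariance Σ̂ := (1/N)Σᵢ (xⁱ − m̂)(xⁱ − m̂)ᵀ, and assume Σ̂ is invertible. Let D ∈ ℝ^{n×n} be symmetric. Then over all affine maps b(x) = Ax + c with A ∈ ℝ^{n×n} and c ∈ ℝⁿ, the empirical score-matching objective F(A,c) := (1/N) Σᵢ [ (1/2)‖A xⁱ + c‖² − Tr(D A) ] has the unique global minimizer A* = D Σ̂⁻¹ and c* = − D Σ̂⁻¹ m̂; that is, the minimizing affine drift is b(x)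 = D Σ̂⁻¹ (x − m̂). -/
/-!
Completing the square. With `vᵢ = xᵢ - m̂` one has `Σᵢ vᵢ = 0`, so
`2N·F(A, c) = Σᵢ |A vᵢ|² + N |A m̂ + c|² - 2N Tr(DA)`. Since `Σ̂` and `D` are symmetric,
`A* = DΣ̂⁻¹` satisfies the normal equation `Σ̂ A*ᵀ = D`, which makes the cross term of
`|A vᵢ|² = |(A - A*) vᵢ + A* vᵢ|²` cancel `2N Tr(D(A - A*))`. Hence
`2N (F(A, c) - F(A*, c*)) = Σᵢ |(A - A*) vᵢ|² + N |A m̂ + c|²`, and this vanishes only if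
`(A - A*) Σ̂ = 0` and `A m̂ + c = 0 = A* m̂ + c*`.
-/

open Matrix Finset

section Centering

variable {ι K V : Type*} [Fintype ι] [DivisionRing K] [CharZero K] [AddCommGroup V] [Module K V]

theorem sum_sub_inv_card_smul_sum [Nonempty ι] (x : ι → V) :
    ∑ i, (x i - (Fintype.card ι : K)⁻¹ • ∑ j, x j) = 0 := by
  rw [sum_sub_distrib, sum_const, card_univ, ← Nat.cast_smul_eq_nsmul K,
    smul_inv_smul₀ (by simp), sub_self]

end Centering

namespace Matrix

variable {ι l m R : Type*} [Fintype ι] [Fintype m] [CommRing R]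

theorem sum_add_dotProduct_self_of_sum_eq_zero (u : ι → m → R) (hu : ∑ i, u i = 0)
    (d : m → R) :
    ∑ i, (u i + d) ⬝ᵥ (u i + d) = ∑ i, u i ⬝ᵥ u i + Fintype.card ι * (d ⬝ᵥ d) := by
  simp only [add_dotProduct, dotProduct_add, sum_add_distrib, ← sum_dotProduct, ← dotProduct_sum,
    hu, zero_dotProduct, dotProduct_zero, sum_const, card_univ, ← Nat.cast_smul_eq_nsmul R,
    smul_dotProduct, smul_eq_mul]
  ring

theorem sum_mulVec_dotProduct_mulVec [Fintype l] (P Q : Matrix l m R) (v : ι → m → R) :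
    ∑ i, (P *ᵥ v i) ⬝ᵥ (Q *ᵥ v i) = trace (P * (∑ i, vecMulVec (v i) (v i)) * Qᵀ) := by
  simp only [Matrix.mul_sum, Matrix.sum_mul, trace_sum, mul_vecMulVec, vecMulVec_mul,
    vecMul_transpose, trace_vecMulVec]

theorem eq_zero_of_forall_mulVec_eq_zero [DecidableEq m] {v : ι → m → R}
    (hv : IsUnit (∑ i, vecMulVec (v i) (v i)).det) {E : Matrix l m R} (hE : ∀ i, E *ᵥ v i = 0) :
    E = 0 := by
  have hEG : E * ∑ i, vecMulVec (v i) (v i) = 0 := by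
    simp [Matrix.mul_sum, mul_vecMulVec, hE]
  rw [← mul_nonsing_inv_cancel_right _ E hv, hEG, Matrix.zero_mul]

end Matrix

section ScoreMatching

variable {ι m : Type*} [Fintype ι] [Fintype m]

/-- `N` times the objective `F` of the paper, `N` being the number of sample points. -/
noncomputable def scoreMatchingLoss (x : ι → m → ℝ) (D A : Matrix m m ℝ) (c : m → ℝ) : ℝ :=
  ∑ i, ((1 / 2) * ∑ k, (A *ᵥ x i + c) k ^ 2 - trace (D * A))

variable {x : ι → m → ℝ} {μ : m → ℝ} {D B : Matrix m m ℝ}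

theorem two_mul_scoreMatchingLoss (hμ : ∑ i, (x i - μ) = 0) (A : Matrix m m ℝ) (c : m → ℝ) :
    2 * scoreMatchingLoss x D A c =
      ∑ i, (A *ᵥ (x i - μ)) ⬝ᵥ (A *ᵥ (x i - μ)) + Fintype.card ι * ((A *ᵥ μ + c) ⬝ᵥ (A *ᵥ μ + c))
        - 2 * Fintype.card ι * trace (D * A) := by
  have hsplit : ∀ i, A *ᵥ x i + c = A *ᵥ (x i - μ) + (A *ᵥ μ + c) := fun i => by
    rw [mulVec_sub]; abel
  have hcentered : ∑ i, A *ᵥ (x i - μ) = 0 := by rw [← mulVec_sum, hμ, mulVec_zero]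
  rw [← sum_add_dotProduct_self_of_sum_eq_zero _ hcentered, scoreMatchingLoss, sum_sub_distrib,
    ← mul_sum, sum_const, card_univ, nsmul_eq_mul]
  simp only [← hsplit, dotProduct, sq]
  ring

theorem sum_mulVec_dotProduct_self_sub_trace
    (hB : (∑ i, vecMulVec (x i - μ) (x i - μ)) * Bᵀ = (Fintype.card ι : ℝ) • D)
    (A : Matrix m m ℝ) :
    ∑ i, (A *ᵥ (x i - μ)) ⬝ᵥ (A *ᵥ (x i - μ)) - 2 * Fintype.card ι * trace (D * A) =
      ∑ i, ((A - B) *ᵥ (x i - μ)) ⬝ᵥ ((A - B) *ᵥ (x i - μ)) +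
        (∑ i, (B *ᵥ (x i - μ)) ⬝ᵥ (B *ᵥ (x i - μ)) - 2 * Fintype.card ι * trace (D * B)) := by
  have hcross : ∑ i, ((A - B) *ᵥ (x i - μ)) ⬝ᵥ (B *ᵥ (x i - μ)) =
      Fintype.card ι * trace (D * (A - B)) := by
    rw [sum_mulVec_dotProduct_mulVec, Matrix.mul_assoc, hB, Matrix.mul_smul, trace_smul,
      trace_mul_comm, smul_eq_mul]
  have hA : A = (A - B) + B := (sub_add_cancel A B).symm
  conv_lhs => rw [hA]
  simp only [add_mulVec, add_dotProduct, dotProduct_add, sum_add_distrib, Matrix.mul_add,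
    trace_add, dotProduct_comm (B *ᵥ _) ((A - B) *ᵥ _), hcross]
  ring

theorem two_mul_scoreMatchingLoss_sub (hμ : ∑ i, (x i - μ) = 0)
    (hB : (∑ i, vecMulVec (x i - μ) (x i - μ)) * Bᵀ = (Fintype.card ι : ℝ) • D)
    {c₀ : m → ℝ} (hc₀ : B *ᵥ μ + c₀ = 0) (A : Matrix m m ℝ) (c : m → ℝ) :
    2 * (scoreMatchingLoss x D A c - scoreMatchingLoss x D B c₀) =
      ∑ i, ((A - B) *ᵥ (x i - μ)) ⬝ᵥ ((A - B) *ᵥ (x i - μ)) +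
        Fintype.card ι * ((A *ᵥ μ + c) ⬝ᵥ (A *ᵥ μ + c)) := by
  rw [mul_sub, two_mul_scoreMatchingLoss hμ, two_mul_scoreMatchingLoss hμ, hc₀,
    add_sub_right_comm, sum_mulVec_dotProduct_self_sub_trace hB]
  simp only [dotProduct_zero, mul_zero, add_zero]
  ring

theorem scoreMatchingLoss_lt [Nonempty ι] [DecidableEq m] (hμ : ∑ i, (x i - μ) = 0)
    (hS : IsUnit (∑ i, vecMulVec (x i - μ) (x i - μ)).det)
    (hB : (∑ i, vecMulVec (x i - μ) (x i - μ)) * Bᵀ = (Fintype.card ι : ℝ) • D)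
    {c₀ : m → ℝ} (hc₀ : B *ᵥ μ + c₀ = 0) {A : Matrix m m ℝ} {c : m → ℝ}
    (hne : (A, c) ≠ (B, c₀)) :
    scoreMatchingLoss x D B c₀ < scoreMatchingLoss x D A c := by
  have hsq_nonneg (y : m → ℝ) : 0 ≤ y ⬝ᵥ y := Fintype.sum_nonneg fun _ => mul_self_nonneg _
  have hsq_pos {y : m → ℝ} (hy : y ≠ 0) : 0 < y ⬝ᵥ y :=
    (hsq_nonneg y).lt_of_ne' (dotProduct_self_eq_zero.not.mpr hy)
  have hcard : (0 : ℝ) < Fintype.card ι := by exact_mod_cast Fintype.card_pos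
  rw [← sub_pos, ← mul_pos_iff_of_pos_left two_pos, two_mul_scoreMatchingLoss_sub hμ hB hc₀]
  by_cases hAB : A = B
  · subst hAB
    have hd : A *ᵥ μ + c ≠ 0 := fun h => hne (by rw [add_left_cancel (h.trans hc₀.symm)])
    simpa using mul_pos hcard (hsq_pos hd)
  · obtain ⟨i, hi⟩ : ∃ i, (A - B) *ᵥ (x i - μ) ≠ 0 := by
      by_contra! h
      exact hAB (sub_eq_zero.mp (eq_zero_of_forall_mulVec_eq_zero hS h))
    refine add_pos_of_pos_of_nonneg ?_ (mul_nonneg hcard.le (hsq_nonneg _))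
    exact Finset.sum_pos' (fun j _ => hsq_nonneg _) ⟨i, mem_univ i, hsq_pos hi⟩

end ScoreMatching

/-- Given points `x¹, …, x^N ∈ ℝⁿ` with empirical mean `m̂` and invertible
empirical covariance `Σ̂`, and `D` symmetric, the empirical score-matching objective
`F(A,c) = (1/N) Σᵢ [ (1/2)‖Axⁱ + c‖² - Tr(DA) ]` over affine maps `b(x) = Ax + c` has the
unique global minimizer `A* = DΣ̂⁻¹`, `c* = -DΣ̂⁻¹m̂`, i.e. the minimizing affine drift is
`b(x) = DΣ̂⁻¹(x - m̂)`. -/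
theorem stmt_12 {n N : ℕ} (hN : 0 < N)
    (x : Fin N → (Fin n → ℝ))
    (mhat : Fin n → ℝ) (hmhat : mhat = (N : ℝ)⁻¹ • ∑ i, x i)
    (Shat : Matrix (Fin n) (Fin n) ℝ)
    (hShat : Shat = (N : ℝ)⁻¹ • ∑ i, vecMulVec (x i - mhat) (x i - mhat))
    (hShatinv : IsUnit Shat.det)
    (D : Matrix (Fin n) (Fin n) ℝ) (hD : D.IsSymm)
    (F : Matrix (Fin n) (Fin n) ℝ → (Fin n → ℝ) → ℝ)
    (hF : ∀ A c, F A c = (N : ℝ)⁻¹ *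
      ∑ i, ((1 / 2) * (∑ k, (A.mulVec (x i) + c) k ^ 2) - Matrix.trace (D * A)))
    (Astar : Matrix (Fin n) (Fin n) ℝ) (hAstar : Astar = D * Shat⁻¹)
    (cstar : Fin n → ℝ) (hcstar : cstar = -((D * Shat⁻¹).mulVec mhat)) :
    ∀ (A : Matrix (Fin n) (Fin n) ℝ) (c : Fin n → ℝ),
      (A, c) ≠ (Astar, cstar) → F Astar cstar < F A c := by
  intro A c hne
  have hNpos : (0 : ℝ) < N := Nat.cast_pos.mpr hN
  have : Nonempty (Fin N) := ⟨⟨0, hN⟩⟩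
  have hscatter : ∑ i, vecMulVec (x i - mhat) (x i - mhat) = (N : ℝ) • Shat := by
    rw [hShat, smul_inv_smul₀ hNpos.ne']
  have hShat_symm : Shatᵀ = Shat := by simp [hShat, transpose_sum]
  have hcentered : ∑ i, (x i - mhat) = 0 := by
    simpa [← hmhat] using sum_sub_inv_card_smul_sum (K := ℝ) x
  have hscatter_unit : IsUnit (∑ i, vecMulVec (x i - mhat) (x i - mhat)).det := by
    rw [hscatter, det_smul]
    exact (IsUnit.pow _ (isUnit_iff_ne_zero.mpr hNpos.ne')).mul hShatinv
  have hAstar_normal : (∑ i, vecMulVec (x i - mhat) (x i - mhat)) * Astarᵀ =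
      (Fintype.card (Fin N) : ℝ) • D := by
    rw [hscatter, hAstar, transpose_mul, transpose_nonsing_inv, hShat_symm, hD.eq,
      Matrix.smul_mul, ← Matrix.mul_assoc, mul_nonsing_inv _ hShatinv, Matrix.one_mul,
      Fintype.card_fin]
  have hcstar' : Astar *ᵥ mhat + cstar = 0 := by rw [hcstar, hAstar, add_neg_cancel]
  rw [hF, hF]
  exact mul_lt_mul_of_pos_left
    (scoreMatchingLoss_lt hcentered hscatter_unit hAstar_normal hcstar' hne) (inv_pos.mpr hNpos)
end
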